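/- If two first-order theories T₁ and T₂ are definitionally equivalent, then their categories of models Mod(T₁) and Mod(T₂) (with elementary embeddings as morphisms) are equivalent categories. -/

import Mathlib

/-!
A model of `T` expands to a model of a definitional extension `T⁺` by interpreting each new
symbol through its definition, and every `L⁺`-formula is equivalent modulo `T⁺` to an
`L`-formula: replace each new symbol by its defining formula, after unnesting terms through
the graphs of their subterms (`R(t̄)` becomes `∃ z̄, ⋀ᵢ tᵢ = zᵢ ∧ R(z̄)`). Hence an
`L`-elementary embedding between models of `T⁺` is already `L⁺`-elementary, and taking
reducts is an equivalence `Mod(T⁺) ≌ Mod(T)`. When `T₁` and `T₂` are definitionally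
equivalent, `T₁⁺` and `T₂⁺` have the same models up to swapping the two halves of the
signature, so the swap gives `Mod(T₁⁺) ≌ Mod(T₂⁺)`, and
`Mod(T₁) ≌ Mod(T₁⁺) ≌ Mod(T₂⁺) ≌ Mod(T₂)`.
-/

open FirstOrder FirstOrder.Language CategoryTheory

universe u v u' v' w

namespace MoritaPaper

variable {L : FirstOrder.Language.{u, v}} {L₂ : FirstOrder.Language.{u', v'}}

/-- The explicit definition `∀ xs (r(xs) ↔ φ(xs))` of a new relation symbol `r` by an
old-signature formula `φ`, as a sentence of the extended signature `L.sum L₂`. -/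
noncomputable def relDefSentence {n : ℕ} (r : L₂.Relations n) (φ : L.Formula (Fin n)) :
    (L.sum L₂).Sentence :=
  Formula.iAlls (Fin n) <| Formula.relabel (Sum.inr : Fin n → Empty ⊕ Fin n)
    ((Relations.formula (Sum.inr r : (L.sum L₂).Relations n) Term.var) ⇔
      (LHom.sumInl.onFormula φ))

/-- The explicit definition `∀ xs ∀ y (f(xs) = y ↔ φ(xs, y))` of a new function symbol `f`
(a constant symbol when `n = 0`) by an old-signature formula `φ`, as a sentence of the
extended signature `L.sum L₂`. -/
noncomputable def funDefSentence {n : ℕ} (f : L₂.Functions n) (φ : L.Formula (Fin (n + 1))) :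
    (L.sum L₂).Sentence :=
  Formula.iAlls (Fin (n + 1)) <| Formula.relabel (Sum.inr : Fin (n + 1) → Empty ⊕ Fin (n + 1))
    ((Term.equal
        (Term.func (Sum.inr f : (L.sum L₂).Functions n) fun i => Term.var i.castSucc)
        (Term.var (Fin.last n))) ⇔
      (LHom.sumInl.onFormula φ))

/-- The admissibility condition for the explicit definition of a function symbol by
`φ(xs, y)` : the theory `T` entails `∀ xs ∃! y φ(xs, y)`. -/
def Admissible (T : L.Theory) {n : ℕ} (φ : L.Formula (Fin (n + 1))) : Prop :=
  ∀ (M : Type w) [Nonempty M] [L.Structure M], M ⊨ T →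
    ∀ xs : Fin n → M, ∃! y : M, φ.Realize (Fin.snoc xs y)

/-- The data of a definitional extension of the `L`-theory `T` to the signature `L.sum L₂`:
an explicit definition by an `L`-formula for every new symbol (every symbol of `L₂`), such
that `T` entails the admissibility conditions of the function- and constant-symbol
definitions. -/
structure DefExt (L : FirstOrder.Language.{u, v}) (L₂ : FirstOrder.Language.{u', v'}) (T : L.Theory) where
  relφ : ∀ {n : ℕ}, L₂.Relations n → L.Formula (Fin n)
  funφ : ∀ {n : ℕ}, L₂.Functions n → L.Formula (Fin (n + 1))
  admissible : ∀ {n : ℕ} (f : L₂.Functions n), Admissible.{u, v, w} T (funφ f)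

/-- The definitional extension `T⁺ = T ∪ {δ_s : s ∈ Σ⁺ − Σ}` itself, as a theory of the
extended signature. -/
noncomputable def DefExt.theory {T : L.Theory} (D : DefExt.{u, v, u', v', w} L L₂ T) :
    (L.sum L₂).Theory :=
  LHom.sumInl.onTheory T ∪
    (⋃ n : ℕ, Set.range fun r : L₂.Relations n => relDefSentence r (D.relφ r)) ∪
    (⋃ n : ℕ, Set.range fun f : L₂.Functions n => funDefSentence f (D.funφ f))

end MoritaPaper

namespace MoritaPaper
variable {L : FirstOrder.Language.{u, v}} {L₂ : FirstOrder.Language.{u', v'}}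

/-- The category `Mod(T)` of models of a first-order theory `T`, with elementary
embeddings as morphisms. -/
instance modelCat (T : L.Theory) : Category (Theory.ModelType.{u, v, w} T) where
  Hom M N := M ↪ₑ[L] N
  id M := ElementaryEmbedding.refl L M
  comp f g := g.comp f
  id_comp _ := ElementaryEmbedding.ext fun _ => rfl
  comp_id _ := ElementaryEmbedding.ext fun _ => rfl
  assoc _ _ _ := ElementaryEmbedding.ext fun _ => rfl

/-- The restriction of a `Σ⁺`-elementary embedding to an elementary embedding between the
`Σ`-reducts. -/
def restrictEmb {M N : Type w} [(L.sum L₂).Structure M] [(L.sum L₂).Structure N]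
    (h : M ↪ₑ[L.sum L₂] N) :
    @FirstOrder.Language.ElementaryEmbedding L M N
      ((LHom.sumInl : L →ᴸ L.sum L₂).reduct M) ((LHom.sumInl : L →ᴸ L.sum L₂).reduct N) :=
  letI := (LHom.sumInl : L →ᴸ L.sum L₂).reduct M
  letI := (LHom.sumInl : L →ᴸ L.sum L₂).reduct N
  { toFun := h
    map_formula' := fun {_} φ x => by
      haveI := LHom.isExpansionOn_reduct (LHom.sumInl : L →ᴸ L.sum L₂) M
      haveI := LHom.isExpansionOn_reduct (LHom.sumInl : L →ᴸ L.sum L₂) N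
      have h' := h.map_formula ((LHom.sumInl : L →ᴸ L.sum L₂).onFormula φ) x
      rwa [LHom.realize_onFormula, LHom.realize_onFormula] at h' }

/-- The language morphism swapping the two halves of a sum signature. -/
def sumCommHom : L₂.sum L →ᴸ L.sum L₂ where
  onFunction := fun {_} f => f.swap
  onRelation := fun {_} r => r.swap

/-- Definitional equivalence: `T₁` and `T₂` are definitionally equivalent if there are a
definitional extension `T₁⁺` of `T₁` and a definitional extension `T₂⁺` of `T₂`, both to
the union signature, that are logically equivalent (have the same models). -/
def DefEquiv (T₁ : L.Theory) (T₂ : L₂.Theory) : Prop :=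
  ∃ (D₁ : DefExt.{u, v, u', v', w} L L₂ T₁) (D₂ : DefExt.{u', v', u, v, w} L₂ L T₂),
    ∀ (M : Type w) [Nonempty M] [S : (L.sum L₂).Structure M],
      @FirstOrder.Language.Theory.Model (L.sum L₂) M S D₁.theory ↔
      @FirstOrder.Language.Theory.Model (L₂.sum L) M
        (@LHom.reduct (L₂.sum L) (L.sum L₂) sumCommHom M S) D₂.theory

universe u₁ v₁ u₂ v₂

open Structure

section Reduct

variable {L' : FirstOrder.Language.{u₁, v₁}} {L'' : FirstOrder.Language.{u₂, v₂}}

def ElementaryEmbedding.reduct (φ : L' →ᴸ L'') {M N : Type*} [L'.Structure M] [L''.Structure M]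
    [L'.Structure N] [L''.Structure N] [φ.IsExpansionOn M] [φ.IsExpansionOn N]
    (f : M ↪ₑ[L''] N) : M ↪ₑ[L'] N where
  toFun := f
  map_formula' {_} ψ x := by
    simpa only [LHom.realize_onFormula] using f.map_formula (φ.onFormula ψ) x

def reductFunctor (φ : L' →ᴸ L'') {T' : L'.Theory} {T'' : L''.Theory}
    (h : ∀ M : Theory.ModelType.{u₂, v₂, w} T'', @Theory.Model L' M (φ.reduct M) T') :
    Theory.ModelType.{u₂, v₂, w} T'' ⥤ Theory.ModelType.{u₁, v₁, w} T' where
  obj M := @Theory.ModelType.mk L' T' M (φ.reduct M) (h M) _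
  map {M N} f := @ElementaryEmbedding.reduct _ _ φ M N (φ.reduct M) _ (φ.reduct N) _
    (LHom.isExpansionOn_reduct φ M) (LHom.isExpansionOn_reduct φ N) f

instance (φ : L' →ᴸ L'') {T' : L'.Theory} {T'' : L''.Theory}
    (h : ∀ M : Theory.ModelType.{u₂, v₂, w} T'', @Theory.Model L' M (φ.reduct M) T') :
    (reductFunctor φ h).Faithful where
  map_injective {_ _} _ _ hfg := ElementaryEmbedding.ext
    (DFunLike.congr_fun (F := (reductFunctor φ h).obj _ ↪ₑ[L'] (reductFunctor φ h).obj _) hfg)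

theorem modelType_mk_eq {T : L'.Theory} (M : Theory.ModelType.{u₁, v₁, w} T)
    {S : L'.Structure M} (hS : S = M.struc) {hM : @Theory.Model L' M S T} :
    @Theory.ModelType.mk L' T M S hM _ = M := by
  cases M
  cases hS
  rfl

theorem model_iUnion_range_iff {M : Type*} [L'.Structure M] {ι : Type*} {κ : ι → Type*}
    (s : ∀ i, κ i → L'.Sentence) : M ⊨ ⋃ i, Set.range (s i) ↔ ∀ i k, M ⊨ s i k := by
  simp only [Theory.model_iff, Set.mem_iUnion, Set.mem_range]
  exact ⟨fun h i k => h _ ⟨i, k, rfl⟩, by rintro h _ ⟨i, k, rfl⟩; exact h i k⟩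

end Reduct

section SumComm

theorem reduct_sumCommHom_reduct {M : Type*} (S : (L₂.sum L).Structure M) :
    @LHom.reduct _ _ (@sumCommHom L L₂) M (@LHom.reduct _ _ (@sumCommHom L₂ L) M S) = S := by
  obtain ⟨F, R⟩ := S
  show Structure.mk _ _ = Structure.mk F R
  congr <;> funext n s xs <;> cases s <;> rfl

theorem isExpansionOn_sumCommHom (M : Type*) [S : (L.sum L₂).Structure M] :
    @LHom.IsExpansionOn (L.sum L₂) (L₂.sum L) (@sumCommHom L₂ L) M S
      (@LHom.reduct (L₂.sum L) (L.sum L₂) (@sumCommHom L L₂) M S) :=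
  @LHom.IsExpansionOn.mk (L.sum L₂) (L₂.sum L) (@sumCommHom L₂ L) M S
      (@LHom.reduct (L₂.sum L) (L.sum L₂) (@sumCommHom L L₂) M S)
    (fun f _ => by cases f <;> rfl) (fun r _ => by cases r <;> rfl)

def SameModelsUpToSwap (T' : (L.sum L₂).Theory) (T'' : (L₂.sum L).Theory) : Prop :=
  ∀ (M : Type w) [Nonempty M] [S : (L.sum L₂).Structure M],
    @Theory.Model _ M S T' ↔ @Theory.Model _ M ((@sumCommHom L L₂).reduct M) T''

variable {T' : (L.sum L₂).Theory} {T'' : (L₂.sum L).Theory}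

theorem model_reduct_sumCommHom (h : SameModelsUpToSwap.{u, v, u', v', w} T' T'')
    (M : Theory.ModelType.{_, _, w} T') : @Theory.Model _ M ((@sumCommHom L L₂).reduct M) T'' :=
  (h M).mp M.is_model

theorem isEquivalence_reductFunctor_sumCommHom (h : SameModelsUpToSwap.{u, v, u', v', w} T' T'') :
    (reductFunctor (@sumCommHom L L₂) (model_reduct_sumCommHom h)).IsEquivalence where
  full.map_surjective {M N} f :=
    ⟨@ElementaryEmbedding.reduct _ _ (@sumCommHom L₂ L) M N _ ((@sumCommHom L L₂).reduct M) _
      ((@sumCommHom L L₂).reduct N) (isExpansionOn_sumCommHom M) (isExpansionOn_sumCommHom N) f,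
      rfl⟩
  essSurj.mem_essImage N := by
    let : (L.sum L₂).Structure N := (@sumCommHom L₂ L).reduct N
    have : N ⊨ T' := (h N).mpr (by rw [reduct_sumCommHom_reduct]; exact N.is_model)
    exact ⟨Theory.ModelType.of T' N,
      ⟨eqToIso (modelType_mk_eq N (reduct_sumCommHom_reduct _))⟩⟩

noncomputable def swapEquivalence (h : SameModelsUpToSwap.{u, v, u', v', w} T' T'') :
    Theory.ModelType.{_, _, w} T' ≌ Theory.ModelType.{_, _, w} T'' :=
  have := isEquivalence_reductFunctor_sumCommHom h
  (reductFunctor (@sumCommHom L L₂) (model_reduct_sumCommHom h)).asEquivalence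

end SumComm

section Graphs

variable {L' : FirstOrder.Language.{u₁, v₁}} {M : Type*} [L'.Structure M]

def Formula.toBoundedFormula {α : Type*} {n : ℕ} (φ : L'.Formula (α ⊕ Fin n)) :
    L'.BoundedFormula α n :=
  BoundedFormula.relabel id φ

theorem Formula.realize_toBoundedFormula {α : Type*} {n : ℕ} (φ : L'.Formula (α ⊕ Fin n))
    (v : α → M) (xs : Fin n → M) :
    (Formula.toBoundedFormula φ).Realize v xs ↔ φ.Realize (Sum.elim v xs) := by
  rw [Formula.toBoundedFormula, BoundedFormula.realize_relabel, Formula.Realize]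
  simp only [Fin.castAdd_zero]
  congr!

noncomputable def substGraphs {β : Type*} {k : ℕ} (θ : Fin k → L'.Formula (β ⊕ Unit))
    (χ : L'.Formula (β ⊕ Fin k)) : L'.Formula β :=
  Formula.iExs (Fin k) (Formula.iInf (fun i => (θ i).relabel (Sum.map id fun _ => i)) ⊓ χ)

theorem realize_substGraphs {β : Type*} {k : ℕ} {θ : Fin k → L'.Formula (β ⊕ Unit)}
    {χ : L'.Formula (β ⊕ Fin k)} {g : Fin k → (β → M) → M}
    (hθ : ∀ i v y, (θ i).Realize (Sum.elim v fun _ => y) ↔ g i v = y) (v : β → M) :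
    (substGraphs θ χ).Realize v ↔ χ.Realize (Sum.elim v fun i => g i v) := by
  have graphs (z : Fin k → M) :
      (∀ i, (θ i).Realize (Sum.elim v fun _ => z i)) ↔ z = fun i => g i v := by
    simp only [hθ, funext_iff, eq_comm]
  simp only [substGraphs, Formula.realize_iExs, Formula.realize_inf, Formula.realize_iInf,
    Formula.realize_relabel, Sum.elim_comp_map, Function.comp_id]
  simp only [Function.comp_def, graphs, exists_eq_left]

end Graphs

section DefiningSentences

variable {M : Type*} [L.Structure M] [(L.sum L₂).Structure M]
  [(LHom.sumInl : L →ᴸ L.sum L₂).IsExpansionOn M]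

theorem realize_relDefSentence {n : ℕ} (r : L₂.Relations n) (φ : L.Formula (Fin n)) :
    M ⊨ relDefSentence r φ ↔
      ∀ xs : Fin n → M, RelMap (L := L.sum L₂) (Sum.inr r) xs ↔ φ.Realize xs := by
  simp only [relDefSentence, Sentence.Realize, Formula.realize_iAlls, Formula.realize_relabel,
    Formula.realize_iff, LHom.realize_onFormula]
  rfl

theorem realize_funDefSentence {n : ℕ} (f : L₂.Functions n) (φ : L.Formula (Fin (n + 1))) :
    M ⊨ funDefSentence f φ ↔
      ∀ (xs : Fin n → M) (y : M),
        funMap (L := L.sum L₂) (Sum.inr f) xs = y ↔ φ.Realize (Fin.snoc xs y) := by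
  simp only [funDefSentence, Sentence.Realize, Formula.realize_iAlls, Formula.realize_relabel,
    Formula.realize_iff, LHom.realize_onFormula, Formula.realize_equal]
  have realize_func (zs : Fin (n + 1) → M) :
      (func (L := L.sum L₂) (Sum.inr f) fun i => var i.castSucc).realize zs =
        funMap (L := L.sum L₂) (Sum.inr f) (Fin.init zs) := rfl
  simp only [realize_func]
  exact ⟨fun h xs y => by simpa using h (Fin.snoc xs y),
    fun h xs => by simpa using h (Fin.init xs) (xs (Fin.last n))⟩

theorem DefExt.model_theory_iff {T : L.Theory} (D : DefExt.{u, v, u', v', w} L L₂ T) :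
    M ⊨ D.theory ↔ M ⊨ T ∧
      (∀ {n} (r : L₂.Relations n) (xs : Fin n → M),
        RelMap (L := L.sum L₂) (Sum.inr r) xs ↔ (D.relφ r).Realize xs) ∧
      (∀ {n} (f : L₂.Functions n) (xs : Fin n → M) (y : M),
        funMap (L := L.sum L₂) (Sum.inr f) xs = y ↔ (D.funφ f).Realize (Fin.snoc xs y)) := by
  rw [DefExt.theory, Theory.model_union_iff, Theory.model_union_iff, LHom.onTheory_model,
    and_assoc]
  refine and_congr Iff.rfl (and_congr ?_ ?_) <;>
    simp only [model_iUnion_range_iff, realize_relDefSentence, realize_funDefSentence]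

end DefiningSentences

namespace DefExt

variable {T : L.Theory} (D : DefExt.{u, v, u', v', w} L L₂ T)

def funGraph : ∀ {k : ℕ}, (L.sum L₂).Functions k → L.Formula (Fin (k + 1))
  | k, Sum.inl f => Term.equal (func f fun i => var i.castSucc) (var (Fin.last k))
  | _, Sum.inr f => D.funφ f

def relGraph : ∀ {k : ℕ}, (L.sum L₂).Relations k → L.Formula (Fin k)
  | _, Sum.inl R => R.formula var
  | _, Sum.inr R => D.relφ R

noncomputable def termGraph {β : Type*} : (L.sum L₂).Term β → L.Formula (β ⊕ Unit)
  | var b => Term.equal (var (Sum.inl b)) (var (Sum.inr ()))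
  | func f ts => substGraphs (fun i => (termGraph (ts i)).relabel (Sum.map Sum.inl id))
      ((D.funGraph f).relabel (Fin.snoc (fun i => Sum.inr i) (Sum.inl (Sum.inr ()))))

noncomputable def translate {α : Type*} :
    ∀ {n : ℕ}, (L.sum L₂).BoundedFormula α n → L.BoundedFormula α n
  | _, .falsum => .falsum
  | _, .equal t₁ t₂ => Formula.toBoundedFormula <|
      substGraphs (fun i => D.termGraph (![t₁, t₂] i))
        ((var (Sum.inr 0)).equal (var (Sum.inr 1)))
  | _, .rel R ts => Formula.toBoundedFormula <|
      substGraphs (fun i => D.termGraph (ts i)) ((D.relGraph R).relabel Sum.inr)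
  | _, .imp φ ψ => (translate φ).imp (translate ψ)
  | _, .all φ => (translate φ).all

section Realize

variable {D} {M : Type*} [L.Structure M] [(L.sum L₂).Structure M]
  [(LHom.sumInl : L →ᴸ L.sum L₂).IsExpansionOn M]

theorem realize_funGraph (hM : M ⊨ D.theory) {k : ℕ} (f : (L.sum L₂).Functions k)
    (xs : Fin k → M) (y : M) : (D.funGraph f).Realize (Fin.snoc xs y) ↔ funMap f xs = y := by
  cases f with
  | inl f =>
    simp only [funGraph, Formula.realize_equal, Term.realize_func, Term.realize_var,
      Fin.snoc_castSucc, Fin.snoc_last, LHom.funMap_sumInl]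
  | inr f => exact ((D.model_theory_iff.mp hM).2.2 f xs y).symm

theorem realize_relGraph (hM : M ⊨ D.theory) {k : ℕ} (R : (L.sum L₂).Relations k)
    (xs : Fin k → M) : (D.relGraph R).Realize xs ↔ RelMap R xs := by
  cases R with
  | inl R =>
    simp only [relGraph, Formula.realize_rel, Term.realize_var]
    exact iff_of_eq (LHom.sumInl.map_onRelation R xs).symm
  | inr R => exact ((D.model_theory_iff.mp hM).2.1 R xs).symm

theorem realize_termGraph (hM : M ⊨ D.theory) {β : Type*} (t : (L.sum L₂).Term β)
    (v : β → M) (y : M) :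
    (D.termGraph t).Realize (Sum.elim v fun _ => y) ↔ t.realize v = y := by
  induction t generalizing v y with
  | var b => simp [termGraph, Formula.realize_equal]
  | func f ts ih =>
    rw [termGraph, realize_substGraphs (g := fun i w => (ts i).realize (w ∘ Sum.inl))]
    · rw [Formula.realize_relabel, Fin.comp_snoc]
      exact realize_funGraph hM f _ y
    · intro i w z
      rw [Formula.realize_relabel, Sum.elim_comp_map]
      exact ih i _ z

theorem realize_translate (hM : M ⊨ D.theory) {α : Type*} {n : ℕ}
    (φ : (L.sum L₂).BoundedFormula α n) (v : α → M) (xs : Fin n → M) :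
    (D.translate φ).Realize v xs ↔ φ.Realize v xs := by
  induction φ with
  | falsum => rfl
  | equal t₁ t₂ =>
    rw [translate, Formula.realize_toBoundedFormula,
      realize_substGraphs fun i => realize_termGraph hM (![t₁, t₂] i)]
    simp only [Formula.realize_equal, Term.realize_var, Sum.elim_inr, Matrix.cons_val_zero,
      Matrix.cons_val_one, Matrix.cons_val_fin_one]
    rfl
  | rel R ts =>
    rw [translate, Formula.realize_toBoundedFormula,
      realize_substGraphs fun i => realize_termGraph hM (ts i), Formula.realize_relabel,
      Sum.elim_comp_inr, realize_relGraph hM]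
    rfl
  | imp φ ψ ihφ ihψ => simp only [translate, BoundedFormula.realize_imp, ihφ, ihψ]
  | all φ ih => simp only [translate, BoundedFormula.realize_all, ih]

end Realize

def liftElementaryEmbedding {M N : Type*} [L.Structure M] [(L.sum L₂).Structure M]
    [(LHom.sumInl : L →ᴸ L.sum L₂).IsExpansionOn M] [L.Structure N] [(L.sum L₂).Structure N]
    [(LHom.sumInl : L →ᴸ L.sum L₂).IsExpansionOn N]
    (hM : M ⊨ D.theory) (hN : N ⊨ D.theory) (f : M ↪ₑ[L] N) : M ↪ₑ[L.sum L₂] N where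
  toFun := f
  map_formula' {_} φ x :=
    (realize_translate hN φ _ default).symm.trans
      ((f.map_formula (D.translate φ) x).trans (realize_translate hM φ x default))

noncomputable abbrev expansion (M : Type w) [L.Structure M] [Nonempty M] (hM : M ⊨ T) :
    L₂.Structure M where
  funMap f xs := (D.admissible f M hM xs).exists.choose
  RelMap r xs := (D.relφ r).Realize xs

theorem model_expansion (M : Type w) [L.Structure M] [Nonempty M] (hM : M ⊨ T) :
    letI := D.expansion M hM
    M ⊨ D.theory := by
  let := D.expansion M hM
  refine D.model_theory_iff.mpr ⟨hM, fun _ _ => Iff.rfl, fun f xs y => ?_⟩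
  have hf := D.admissible f M hM xs
  exact ⟨fun hy => hy ▸ hf.exists.choose_spec, fun hy => hf.unique hf.exists.choose_spec hy⟩

theorem model_reduct (M : Theory.ModelType.{_, _, w} D.theory) :
    @Theory.Model L M ((LHom.sumInl : L →ᴸ L.sum L₂).reduct M) T :=
  letI := (LHom.sumInl : L →ᴸ L.sum L₂).reduct M
  (D.model_theory_iff.mp M.is_model).1

instance : (reductFunctor LHom.sumInl D.model_reduct).IsEquivalence where
  full.map_surjective {M N} f :=
    ⟨@liftElementaryEmbedding _ _ _ D M N (LHom.sumInl.reduct M) _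
      (LHom.isExpansionOn_reduct _ _) (LHom.sumInl.reduct N) _ (LHom.isExpansionOn_reduct _ _)
      M.is_model N.is_model f, rfl⟩
  essSurj.mem_essImage M := by
    let := D.expansion M M.is_model
    have := D.model_expansion M M.is_model
    exact ⟨Theory.ModelType.of D.theory M, ⟨Iso.refl _⟩⟩

noncomputable def reductEquivalence :
    Theory.ModelType.{_, _, w} D.theory ≌ Theory.ModelType.{_, _, w} T :=
  (reductFunctor LHom.sumInl D.model_reduct).asEquivalence

end DefExt

/-- If two first-order theories `T₁` and `T₂` are definitionally
equivalent, then their categories of models `Mod(T₁)` and `Mod(T₂)` (with elementary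
embeddings as morphisms) are equivalent categories. -/
theorem defEquiv_categoricallyEquivalent {T₁ : L.Theory} {T₂ : L₂.Theory}
    (h : DefEquiv.{u, v, u', v', w} T₁ T₂) :
    Nonempty (Theory.ModelType.{u, v, w} T₁ ≌ Theory.ModelType.{u', v', w} T₂) := by
  obtain ⟨D₁, D₂, h⟩ := h
  exact ⟨D₁.reductEquivalence.symm.trans ((swapEquivalence h).trans D₂.reductEquivalence)⟩

end MoritaPaper
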